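/- arXiv:1710.04265 — 4 statements merged into one kernel-verified Lean document; each statement's English description precedes it below -/
import Mathlib

section
/- If the maximal depth function ρ_max = √U satisfies ρ_max'(θ) ≠ 0 for all θ in the interval I (equivalently U'(θ) ≠ 0 on I, with U > 0), then every C¹ solution of (ρ')² + ρ² = U on I has nowhere-vanishing derivative; hence each solution is either strictly increasing on all of I or strictly decreasing on all of I. -/
open Real Set

/-- if `U > 0` and `U' ≠ 0` on an interval `I` (equivalently the maximal
depth function `√U` has nowhere-vanishing derivative), then every `C²` solution of
`(ρ')² + ρ² = U` on `I` has nowhere-vanishing derivative, hence is strictly monotone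
on all of `I`. -/
theorem no_critical_points_implies_strict_monotone
    (I : Set ℝ) (hI : IsOpen I) (hIconn : I.OrdConnected)
    (U : ℝ → ℝ) (hU : ContDiffOn ℝ 1 U I)
    (hUpos : ∀ θ ∈ I, 0 < U θ)
    (hU' : ∀ θ ∈ I, deriv U θ ≠ 0)
    (ρ : ℝ → ℝ) (hρ : ContDiffOn ℝ 2 ρ I)
    (hsol : ∀ θ ∈ I, (deriv ρ θ) ^ 2 + (ρ θ) ^ 2 = U θ) :
    (∀ θ ∈ I, deriv ρ θ ≠ 0) ∧ (StrictMonoOn ρ I ∨ StrictAntiOn ρ I) := by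
  have hconv : Convex ℝ I := convex_iff_ordConnected.mpr hIconn
  -- differentiability facts
  have hρdiff : ∀ θ ∈ I, DifferentiableAt ℝ ρ θ := fun θ hθ =>
    ((hρ.differentiableOn (by norm_num)) θ hθ).differentiableAt (hI.mem_nhds hθ)
  have hρ'C1 : ContDiffOn ℝ 1 (deriv ρ) I := hρ.deriv_of_isOpen hI (by norm_num)
  have hρ'diff : ∀ θ ∈ I, DifferentiableAt ℝ (deriv ρ) θ := fun θ hθ =>
    ((hρ'C1.differentiableOn (by norm_num)) θ hθ).differentiableAt (hI.mem_nhds hθ)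
  have hρ'cont : ContinuousOn (deriv ρ) I := fun θ hθ =>
    (hρ'diff θ hθ).continuousAt.continuousWithinAt
  have key : ∀ θ ∈ I, deriv ρ θ ≠ 0 := by
    intro θ hθ hzero
    -- derivative of both sides
    have heq : (fun x => (deriv ρ x) ^ 2 + (ρ x) ^ 2) =ᶠ[nhds θ] U := by
      filter_upwards [hI.mem_nhds hθ] with x hx using hsol x hx
    have hderiv : deriv (fun x => (deriv ρ x) ^ 2 + (ρ x) ^ 2) θ = deriv U θ :=
      heq.deriv_eq
    have hd1 : HasDerivAt (fun x => (deriv ρ x) ^ 2) (2 * deriv ρ θ * deriv (deriv ρ) θ) θ := by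
      simpa [mul_comm] using ((hρ'diff θ hθ).hasDerivAt.fun_pow 2)
    have hd2 : HasDerivAt (fun x => (ρ x) ^ 2) (2 * ρ θ * deriv ρ θ) θ := by
      simpa [mul_comm] using ((hρdiff θ hθ).hasDerivAt.fun_pow 2)
    have : deriv (fun x => (deriv ρ x) ^ 2 + (ρ x) ^ 2) θ
        = 2 * deriv ρ θ * deriv (deriv ρ) θ + 2 * ρ θ * deriv ρ θ :=
      (hd1.add hd2).deriv
    rw [this, hzero] at hderiv
    simp at hderiv
    exact hU' θ hθ hderiv.symm
  refine ⟨key, ?_⟩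
  rcases Set.eq_empty_or_nonempty I with rfl | ⟨θ₀, hθ₀⟩
  · left; intro x hx; simp at hx
  -- constant sign of deriv ρ on I
  have hsign : (∀ θ ∈ I, 0 < deriv ρ θ) ∨ (∀ θ ∈ I, deriv ρ θ < 0) := by
    rcases lt_or_gt_of_ne (key θ₀ hθ₀) with h0 | h0
    · right; intro θ hθ
      by_contra h
      push_neg at h
      have hpos : 0 < deriv ρ θ := lt_of_le_of_ne h (Ne.symm (key θ hθ))
      have hpre : IsPreconnected I := hconv.isPreconnected
      have := hpre.intermediate_value₂ hθ₀ hθ hρ'cont continuousOn_const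
        (le_of_lt h0) (le_of_lt hpos)
      obtain ⟨x, hx, hx0⟩ := this
      exact key x hx hx0
    · left; intro θ hθ
      by_contra h
      push_neg at h
      have hneg : deriv ρ θ < 0 := lt_of_le_of_ne h (key θ hθ)
      have hpre : IsPreconnected I := hconv.isPreconnected
      have := hpre.intermediate_value₂ hθ hθ₀ hρ'cont continuousOn_const
        (le_of_lt hneg) (le_of_lt h0)
      obtain ⟨x, hx, hx0⟩ := this
      exact key x hx hx0
  have hcont : ContinuousOn ρ I := fun x hx => (hρdiff x hx).continuousAt.continuousWithinAt
  rcases hsign with hpos | hneg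
  · left
    exact StrictMonoOn.mono (strictMonoOn_of_deriv_pos hconv hcont
      (by intro x hx; exact hpos x ((hI.interior_eq ▸ hx))) ) le_rfl
  · right
    exact StrictAntiOn.mono (strictAntiOn_of_deriv_neg hconv hcont
      (by intro x hx; exact hneg x ((hI.interior_eq ▸ hx))) ) le_rfl
end

section
/- Let θ₀ ∈ I be the unique critical point of the equation in I and suppose ρ₁, ρ₂ are two C¹ solutions of ρ' = √(U − ρ²) on [θ₀, θ₀ + ε] with ρ₁(θ₀) = ρ₂(θ₀) = ρ₀ and ρ₁'(θ), ρ₂'(θ) > 0 for θ > θ₀. Then ρ₁ = ρ₂ on [θ₀, θ₀ + ε]. (Uniqueness of the increasing solution emanating rightward from a critical point that is a minimum of ρ_max: if ρ₁ > ρ₂ somewhere then ρ₁' < ρ₂' there since ρ' = √(U − ρ²) is decreasing in ρ, a contradiction.) -/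
open Real Set

/-- uniqueness of the increasing solution emanating rightward from a
critical point which is a minimum of the maximal depth function: if `ρ₁, ρ₂` both solve
`ρ' = √(U − ρ²)` on `[θ₀, θ₀ + ε]`, start at `ρ₀ = √(U θ₀)` and have positive derivative
for `θ > θ₀`, then `ρ₁ = ρ₂` on `[θ₀, θ₀ + ε]`. -/
theorem unique_increasing_solution_from_minimum
    (U : ℝ → ℝ) (θ₀ ε : ℝ) (hε : 0 < ε)
    (hUc : ContinuousOn U (Set.Icc θ₀ (θ₀ + ε)))
    (hUpos : ∀ θ ∈ Set.Icc θ₀ (θ₀ + ε), 0 < U θ)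
    (ρ₀ : ℝ) (hρ₀ : ρ₀ = Real.sqrt (U θ₀))
    (ρ₁ ρ₂ : ℝ → ℝ)
    (h₁ : ∀ θ ∈ Set.Icc θ₀ (θ₀ + ε), HasDerivAt ρ₁ (Real.sqrt (U θ - (ρ₁ θ) ^ 2)) θ)
    (h₂ : ∀ θ ∈ Set.Icc θ₀ (θ₀ + ε), HasDerivAt ρ₂ (Real.sqrt (U θ - (ρ₂ θ) ^ 2)) θ)
    (hic₁ : ρ₁ θ₀ = ρ₀) (hic₂ : ρ₂ θ₀ = ρ₀)
    (hpos₁ : ∀ θ ∈ Set.Ioc θ₀ (θ₀ + ε), 0 < deriv ρ₁ θ)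
    (hpos₂ : ∀ θ ∈ Set.Ioc θ₀ (θ₀ + ε), 0 < deriv ρ₂ θ) :
    Set.EqOn ρ₁ ρ₂ (Set.Icc θ₀ (θ₀ + ε)) := by
  have hmem₀ : θ₀ ∈ Set.Icc θ₀ (θ₀ + ε) := by
    constructor <;> linarith
  have hIoo : Set.Ioo θ₀ (θ₀ + ε) ⊆ Set.Icc θ₀ (θ₀ + ε) := Set.Ioo_subset_Icc_self
  have hint : interior (Set.Icc θ₀ (θ₀ + ε)) = Set.Ioo θ₀ (θ₀ + ε) := interior_Icc
  -- continuity of solutions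
  have hc₁ : ContinuousOn ρ₁ (Set.Icc θ₀ (θ₀ + ε)) :=
    fun x hx => ((h₁ x hx).continuousAt).continuousWithinAt
  have hc₂ : ContinuousOn ρ₂ (Set.Icc θ₀ (θ₀ + ε)) :=
    fun x hx => ((h₂ x hx).continuousAt).continuousWithinAt
  -- solutions are monotone, hence nonnegative
  have mono : ∀ ρ : ℝ → ℝ,
      (∀ θ ∈ Set.Icc θ₀ (θ₀ + ε), HasDerivAt ρ (Real.sqrt (U θ - (ρ θ) ^ 2)) θ) →
      MonotoneOn ρ (Set.Icc θ₀ (θ₀ + ε)) := by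
    intro ρ hρ
    apply monotoneOn_of_deriv_nonneg (convex_Icc _ _)
      (fun x hx => ((hρ x hx).continuousAt).continuousWithinAt)
    · intro x hx
      rw [hint] at hx
      exact ((hρ x (hIoo hx)).differentiableAt).differentiableWithinAt
    · intro x hx
      rw [hint] at hx
      rw [(hρ x (hIoo hx)).deriv]
      exact Real.sqrt_nonneg _
  have hnn : ∀ θ ∈ Set.Icc θ₀ (θ₀ + ε), 0 ≤ ρ₁ θ ∧ 0 ≤ ρ₂ θ := by
    intro θ hθ
    have h1 := mono ρ₁ h₁ hmem₀ hθ hθ.1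
    have h2 := mono ρ₂ h₂ hmem₀ hθ hθ.1
    have : 0 ≤ ρ₀ := hρ₀ ▸ Real.sqrt_nonneg _
    constructor <;> linarith [hic₁ ▸ h1, hic₂ ▸ h2]
  -- the squared difference
  set φ : ℝ → ℝ := fun θ => (ρ₁ θ - ρ₂ θ) ^ 2 with hφ
  have hφd : ∀ θ ∈ Set.Icc θ₀ (θ₀ + ε), HasDerivAt φ
      (2 * (ρ₁ θ - ρ₂ θ) ^ 1 *
        (Real.sqrt (U θ - (ρ₁ θ) ^ 2) - Real.sqrt (U θ - (ρ₂ θ) ^ 2))) θ := by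
    intro θ hθ
    have := ((h₁ θ hθ).sub (h₂ θ hθ)).fun_pow 2
    simpa using this
  have hφanti : AntitoneOn φ (Set.Icc θ₀ (θ₀ + ε)) := by
    apply antitoneOn_of_deriv_nonpos (convex_Icc _ _)
    · exact fun x hx => ((hφd x hx).continuousAt).continuousWithinAt
    · intro x hx
      rw [hint] at hx
      exact ((hφd x (hIoo hx)).differentiableAt).differentiableWithinAt
    · intro x hx
      rw [hint] at hx
      have hx' := hIoo hx
      rw [(hφd x hx').deriv]
      obtain ⟨ha, hb⟩ := hnn x hx'
      rcases le_total (ρ₁ x) (ρ₂ x) with h | h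
      · apply mul_nonpos_of_nonpos_of_nonneg
        · nlinarith
        · apply sub_nonneg.2
          apply Real.sqrt_le_sqrt
          nlinarith
      · apply mul_nonpos_of_nonneg_of_nonpos
        · nlinarith
        · apply sub_nonpos.2
          apply Real.sqrt_le_sqrt
          nlinarith
  intro θ hθ
  have hle : φ θ ≤ φ θ₀ := hφanti hmem₀ hθ hθ.1
  have h0 : φ θ₀ = 0 := by simp [hφ, hic₁, hic₂]
  have hge : 0 ≤ φ θ := sq_nonneg _
  have : (ρ₁ θ - ρ₂ θ) ^ 2 = 0 := le_antisymm (h0 ▸ hle) hge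
  have := pow_eq_zero_iff (n := 2) (by norm_num) |>.1 this
  linarith [sub_eq_zero.1 this]
end

section
/- The constant function x₁(θ) = 1 and the function x₂(θ) = cos(θ) are both solutions on [0, π/2] of the initial value problem (ρ')² + ρ² = 1 with ρ(0) = 1, and they are the only analytic solutions of this IVP on [0, π/2]. -/
open Real Set Filter Topology

private lemma analyticAt_real_cos (x : ℝ) : AnalyticAt ℝ Real.cos x := by
  have h1 : AnalyticAt ℂ Complex.cos ((x : ℝ) : ℂ) :=
    Complex.differentiable_cos.analyticAt _
  have h2 : AnalyticAt ℝ (⇑Complex.reCLM ∘ Complex.cos ∘ ⇑Complex.ofRealCLM) x :=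
    (Complex.reCLM.analyticAt _).comp
      ((h1.restrictScalars).comp (Complex.ofRealCLM.analyticAt x))
  have heq : Real.cos = ⇑Complex.reCLM ∘ Complex.cos ∘ ⇑Complex.ofRealCLM := by
    funext t
    simp [Function.comp, Complex.cos_ofReal_re]
  rw [heq]
  exact h2

private lemma extend_boundary {f g : ℝ → ℝ} (h : ∀ θ ∈ Set.Ico (0:ℝ) (π/2), f θ = g θ)
    (hf : ContinuousAt f (π/2)) (hg : ContinuousAt g (π/2)) :
    ∀ θ ∈ Set.Icc (0:ℝ) (π/2), f θ = g θ := by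
  intro θ hθ
  rcases lt_or_eq_of_le hθ.2 with hlt | heq
  · exact h θ ⟨hθ.1, hlt⟩
  · have hev : f =ᶠ[𝓝[<] (π/2:ℝ)] g := by
      filter_upwards [Ioo_mem_nhdsLT_of_mem
        (⟨pi_div_two_pos, le_refl _⟩ : (π/2 : ℝ) ∈ Set.Ioc 0 (π/2))] with t ht
      exact h t ⟨le_of_lt ht.1, ht.2⟩
    have t1 : Tendsto f (𝓝[<] (π/2:ℝ)) (𝓝 (f (π/2))) := hf.continuousWithinAt
    have t2 : Tendsto f (𝓝[<] (π/2:ℝ)) (𝓝 (g (π/2))) :=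
      (hg.continuousWithinAt : Tendsto g (𝓝[<] (π/2:ℝ)) (𝓝 (g (π/2)))).congr' hev.symm
    rw [heq]
    exact tendsto_nhds_unique t1 t2

set_option maxHeartbeats 2000000 in
/-- `x₁ ≡ 1` and `x₂ = cos` solve `(ρ')² + ρ² = 1`, `ρ 0 = 1` on
`[0, π/2]`, and every solution which is real-analytic at each point of `[0, π/2)`
coincides on `[0, π/2]` with one of them. -/
theorem two_analytic_solutions_constant_U :
    ((∀ θ ∈ Set.Icc (0 : ℝ) (π / 2),
        (deriv (fun _ : ℝ => (1 : ℝ)) θ) ^ 2 + ((1 : ℝ)) ^ 2 = 1) ∧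
      (1 : ℝ) = 1) ∧
    ((∀ θ ∈ Set.Icc (0 : ℝ) (π / 2),
        (deriv Real.cos θ) ^ 2 + (Real.cos θ) ^ 2 = 1) ∧ Real.cos 0 = 1) ∧
    (∀ ρ : ℝ → ℝ,
      (∀ θ ∈ Set.Ico (0 : ℝ) (π / 2), AnalyticAt ℝ ρ θ) →
      (∀ θ ∈ Set.Icc (0 : ℝ) (π / 2), DifferentiableAt ℝ ρ θ) →
      (∀ θ ∈ Set.Icc (0 : ℝ) (π / 2), (deriv ρ θ) ^ 2 + (ρ θ) ^ 2 = 1) →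
      ρ 0 = 1 →
      (∀ θ ∈ Set.Icc (0 : ℝ) (π / 2), ρ θ = 1) ∨
        (∀ θ ∈ Set.Icc (0 : ℝ) (π / 2), ρ θ = Real.cos θ)) := by
  refine ⟨⟨fun θ _ => by simp, rfl⟩,
    ⟨fun θ _ => by
      have h := Real.sin_sq_add_cos_sq θ
      rw [Real.deriv_cos]; nlinarith, Real.cos_zero⟩, ?_⟩
  intro ρ han hdiff hode hinit
  have hπ2 : (0:ℝ) < π/2 := pi_div_two_pos
  have hbound : ∀ θ ∈ Set.Icc (0:ℝ) (π/2), ρ θ ≤ 1 ∧ -1 ≤ ρ θ := by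
    intro θ hθ
    have h := hode θ hθ
    constructor <;> nlinarith [sq_nonneg (deriv ρ θ)]
  have hconts : ∀ θ ∈ Set.Icc (0:ℝ) (π/2), ContinuousAt ρ θ :=
    fun θ hθ => (hdiff θ hθ).continuousAt
  rcases (han 0 ⟨le_refl 0, hπ2⟩).eventually_eq_or_eventually_ne
      (analyticAt_const : AnalyticAt ℝ (fun _ : ℝ => (1:ℝ)) 0) with hcase | hcase
  · left
    have heqIco : Set.EqOn ρ (fun _ => (1:ℝ)) (Set.Ico 0 (π/2)) :=
      AnalyticOnNhd.eqOn_of_preconnected_of_eventuallyEq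
        (fun x hx => han x hx) (fun x _ => analyticAt_const)
        ((convex_Ico _ _).isPreconnected) ⟨le_refl 0, hπ2⟩ hcase
    exact extend_boundary (fun θ hθ => heqIco hθ)
      (hconts _ ⟨le_of_lt hπ2, le_refl _⟩) continuousAt_const
  · obtain ⟨ε₁, hε₁pos, hε₁⟩ : ∃ ε > 0, ∀ z : ℝ, z ≠ 0 → |z| < ε → ρ z ≠ 1 := by
      have h1 := eventually_nhdsWithin_iff.mp hcase
      rcases Metric.eventually_nhds_iff.mp h1 with ⟨δ, hδ, h⟩
      exact ⟨δ, hδ, fun z hz hlt =>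
        h (by simpa [Real.dist_eq] using hlt) (by simpa using hz)⟩
    obtain ⟨ε₂, hε₂pos, hε₂⟩ : ∃ ε > 0, ∀ z : ℝ, |z| < ε → 0 < ρ z := by
      have h1 : Tendsto ρ (𝓝 0) (𝓝 1) := by
        simpa [hinit] using (hconts 0 ⟨le_refl 0, le_of_lt hπ2⟩).tendsto
      have h2 := h1.eventually (eventually_gt_nhds (by norm_num : (0:ℝ) < 1))
      rcases Metric.eventually_nhds_iff.mp h2 with ⟨δ, hδ, h⟩
      exact ⟨δ, hδ, fun z hlt => h (by simpa [Real.dist_eq] using hlt)⟩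
    set ε := min (min ε₁ ε₂) (π/2) with hε
    have hεpos : 0 < ε := lt_min (lt_min hε₁pos hε₂pos) hπ2
    have hεle : ε ≤ π/2 := min_le_right _ _
    have hεle1 : ε ≤ ε₁ := le_trans (min_le_left _ _) (min_le_left _ _)
    have hεle2 : ε ≤ ε₂ := le_trans (min_le_left _ _) (min_le_right _ _)
    have hmemIcc : ∀ θ ∈ Set.Ioo 0 ε, θ ∈ Set.Icc (0:ℝ) (π/2) :=
      fun θ hθ => ⟨le_of_lt hθ.1, le_of_lt (lt_of_lt_of_le hθ.2 hεle)⟩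
    have hlt1 : ∀ θ ∈ Set.Ioo 0 ε, ρ θ < 1 := by
      intro θ hθ
      have hne := hε₁ θ (ne_of_gt hθ.1)
        (by rw [abs_of_pos hθ.1]; exact lt_of_lt_of_le hθ.2 hεle1)
      exact lt_of_le_of_ne ((hbound θ (hmemIcc θ hθ)).1) hne
    have hpos : ∀ θ ∈ Set.Ioo 0 ε, 0 < ρ θ := fun θ hθ =>
      hε₂ θ (by rw [abs_of_pos hθ.1]; exact lt_of_lt_of_le hθ.2 hεle2)
    have hsq : ∀ θ ∈ Set.Ioo 0 ε, 0 < 1 - ρ θ ^ 2 := by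
      intro θ hθ; nlinarith [hlt1 θ hθ, hpos θ hθ]
    have hderiv_ne : ∀ θ ∈ Set.Ioo 0 ε, deriv ρ θ ≠ 0 := by
      intro θ hθ h0
      have h := hode θ (hmemIcc θ hθ)
      rw [h0] at h
      nlinarith [hsq θ hθ]
    have hderiv_cont : ∀ θ ∈ Set.Ico (0:ℝ) (π/2), ContinuousAt (deriv ρ) θ :=
      fun θ hθ => ((AnalyticOnNhd.deriv (fun x hx => han x hx)) θ hθ).continuousAt
    have hneg : ∀ θ ∈ Set.Ioo 0 ε, deriv ρ θ < 0 := by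
      by_contra hcon
      push_neg at hcon
      obtain ⟨θ₀, hθ₀, hge⟩ := hcon
      have hpos0 : 0 < deriv ρ θ₀ := lt_of_le_of_ne hge (Ne.symm (hderiv_ne θ₀ hθ₀))
      have hall : ∀ t ∈ Set.Ioo (0:ℝ) θ₀, 0 < deriv ρ t := by
        intro t ht
        rcases lt_or_gt_of_ne (hderiv_ne t ⟨ht.1, lt_trans ht.2 hθ₀.2⟩) with hlt | hgt
        · exfalso
          have hsub : Set.Icc t θ₀ ⊆ Set.Ioo 0 ε := fun x hx =>
            ⟨lt_of_lt_of_le ht.1 hx.1, lt_of_le_of_lt hx.2 hθ₀.2⟩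
          have hcont : ContinuousOn (deriv ρ) (Set.Icc t θ₀) := fun x hx =>
            (hderiv_cont x ⟨le_of_lt (hsub hx).1,
              lt_of_lt_of_le (hsub hx).2 hεle⟩).continuousWithinAt
          have h0mem : (0:ℝ) ∈ Set.Icc (deriv ρ t) (deriv ρ θ₀) :=
            ⟨le_of_lt hlt, le_of_lt hpos0⟩
          obtain ⟨c, hc, hc0⟩ := intermediate_value_Icc (le_of_lt ht.2) hcont h0mem
          exact hderiv_ne c (hsub hc) hc0
        · exact hgt
      have hsm : StrictMonoOn ρ (Set.Icc 0 θ₀) := by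
        apply strictMonoOn_of_deriv_pos (convex_Icc _ _)
        · intro x hx
          exact (hconts x ⟨hx.1, le_trans hx.2
            (le_of_lt (lt_of_lt_of_le hθ₀.2 hεle))⟩).continuousWithinAt
        · intro x hx
          rw [interior_Icc] at hx
          exact hall x hx
      have h1 := hsm ⟨le_refl 0, le_of_lt hθ₀.1⟩ ⟨le_of_lt hθ₀.1, le_refl _⟩ hθ₀.1
      rw [hinit] at h1
      exact absurd h1 (not_lt.2 ((hbound θ₀ (hmemIcc θ₀ hθ₀)).1))
    have hderiv_eq : ∀ θ ∈ Set.Ioo 0 ε, deriv ρ θ = -Real.sqrt (1 - ρ θ ^ 2) := by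
      intro θ hθ
      have h := hode θ (hmemIcc θ hθ)
      have h2 : 1 - ρ θ ^ 2 = (deriv ρ θ) ^ 2 := by linarith
      rw [h2, Real.sqrt_sq_eq_abs, abs_of_neg (hneg θ hθ), neg_neg]
    have hg' : ∀ θ ∈ Set.Ioo 0 ε, HasDerivAt (fun t => Real.arccos (ρ t)) 1 θ := by
      intro θ hθ
      have hne1 : ρ θ ≠ 1 := ne_of_lt (hlt1 θ hθ)
      have hne1' : ρ θ ≠ -1 := ne_of_gt (by linarith [hpos θ hθ])
      have ha := Real.hasDerivAt_arccos hne1' hne1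
      have hd := (hdiff θ (hmemIcc θ hθ)).hasDerivAt
      have hc := ha.comp θ hd
      have hs : Real.sqrt (1 - ρ θ ^ 2) ≠ 0 := ne_of_gt (Real.sqrt_pos.2 (hsq θ hθ))
      refine hc.congr_deriv ?_
      rw [hderiv_eq θ hθ]
      field_simp
    have harccos : ∀ b ∈ Set.Ioo 0 ε, Real.arccos (ρ b) = b := by
      intro b hb
      set G := fun t => Real.arccos (ρ t) - t with hG
      have hGconst : ∀ δ ∈ Set.Ioo 0 b, G b = G δ := by
        intro δ hδ
        have hcont : ContinuousOn G (Set.Icc δ b) := by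
          intro x hx
          have hx' : x ∈ Set.Icc (0:ℝ) (π/2) :=
            ⟨le_trans (le_of_lt hδ.1) hx.1,
              le_trans hx.2 (le_trans (le_of_lt hb.2) hεle)⟩
          exact ((Real.continuous_arccos.continuousAt.comp (hconts x hx')).sub
            continuousAt_id).continuousWithinAt
        have hder : ∀ x ∈ Set.Ico δ b, HasDerivWithinAt G 0 (Set.Ici x) x := by
          intro x hx
          have hx' : x ∈ Set.Ioo 0 ε := ⟨lt_of_lt_of_le hδ.1 hx.1, lt_trans hx.2 hb.2⟩
          have h := (hg' x hx').sub (hasDerivAt_id x)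
          have h2 := h.hasDerivWithinAt (s := Set.Ici x)
          rw [sub_self] at h2
          exact h2
        exact (constant_of_has_deriv_right_zero hcont hder b
          ⟨le_of_lt hδ.2, le_refl b⟩)
      have hT : Tendsto G (𝓝[>] (0:ℝ)) (𝓝 0) := by
        have hc : ContinuousAt G 0 :=
          ((Real.continuous_arccos.continuousAt.comp
            (hconts 0 ⟨le_refl 0, le_of_lt hπ2⟩)).sub continuousAt_id)
        have h0 : G 0 = 0 := by simp [hG, hinit, Real.arccos_one]
        have := hc.continuousWithinAt (s := Set.Ioi (0:ℝ))
        rw [ContinuousWithinAt, h0] at this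
        exact this
      have hT2 : Tendsto G (𝓝[>] (0:ℝ)) (𝓝 (G b)) := by
        apply Tendsto.congr' _ (tendsto_const_nhds (α := ℝ) (f := 𝓝[>] (0:ℝ)))
        filter_upwards [Ioo_mem_nhdsGT_of_mem ⟨le_refl (0:ℝ), hb.1⟩] with δ hδ
        exact hGconst δ hδ
      have hGb : G b = 0 := tendsto_nhds_unique hT2 hT
      have : Real.arccos (ρ b) - b = 0 := hGb
      linarith
    have hρcos : ∀ b ∈ Set.Ioo 0 ε, ρ b = Real.cos b := by
      intro b hb
      have h1 := Real.cos_arccos ((hbound b (hmemIcc b hb)).2)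
        ((hbound b (hmemIcc b hb)).1)
      rw [harccos b hb] at h1
      exact h1.symm
    right
    have hmid : ε/2 ∈ Set.Ico (0:ℝ) (π/2) :=
      ⟨le_of_lt (half_pos hεpos), lt_of_lt_of_le (by linarith) hεle⟩
    have hev : ρ =ᶠ[𝓝 (ε/2)] Real.cos := by
      filter_upwards [isOpen_Ioo.mem_nhds
        (⟨half_pos hεpos, half_lt_self hεpos⟩ : ε/2 ∈ Set.Ioo 0 ε)] with t ht
      exact hρcos t ht
    have heqIco : Set.EqOn ρ Real.cos (Set.Ico 0 (π/2)) :=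
      AnalyticOnNhd.eqOn_of_preconnected_of_eventuallyEq (fun x hx => han x hx)
        (fun x _ => analyticAt_real_cos x) ((convex_Ico _ _).isPreconnected) hmid hev
    exact extend_boundary (fun θ hθ => heqIco hθ)
      (hconts _ ⟨le_of_lt hπ2, le_refl _⟩) Real.continuous_cos.continuousAt
end

section
/- Let f : [θ₀, b] × ℝ → ℝ be continuous with f(θ₀, ρ₀) = 0, and suppose f is locally Lipschitz in the second variable at every point (θ, ξ) with θ ∈ (θ₀, b]. Let x₁, x₂ be two solutions of ρ' = f(θ, ρ), ρ(θ₀) = ρ₀, with x₁(θ) < x₂(θ) for θ ∈ (θ₀, b]. If (θ*, ρ*) satisfies θ* ∈ (θ₀, b] and x₁(θ*) < ρ* < x₂(θ*), then the unique solution x* of ρ' = f(θ, ρ) with ρ(θ*) = ρ*, extended backwards to θ₀, satisfies x₁(θ) < x*(θ) < x₂(θ) for all θ ∈ (θ₀, b] where it is defined, and lim_{θ → θ₀⁺} x*(θ) = ρ₀, so x* also solves the original IVP. -/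
open Real Set Filter

private lemma ode_local_eq_right
    (f : ℝ → ℝ → ℝ) (a b : ℝ)
    (hlip : ∀ θ ∈ Set.Ioc a b, ∀ ξ : ℝ, ∃ ε > 0, ∃ K : NNReal,
      ∀ t ∈ Set.Ioc a b ∩ Set.Ioo (θ - ε) (θ + ε),
        LipschitzOnWith K (f t) (Set.Ioo (ξ - ε) (ξ + ε)))
    (p q : ℝ → ℝ)
    (hp : ∀ θ ∈ Set.Ioc a b, HasDerivAt p (f θ (p θ)) θ)
    (hq : ∀ θ ∈ Set.Ioc a b, HasDerivAt q (f θ (q θ)) θ)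
    {t : ℝ} (ht : t ∈ Set.Ioc a b) (htb : t < b) (heq : p t = q t) :
    ∃ δ > 0, t + δ ≤ b ∧ Set.EqOn p q (Set.Icc t (t + δ)) := by
  obtain ⟨ε, hε, K, hK⟩ := hlip t ht (p t)
  obtain ⟨δ₁, hδ₁, hpc⟩ := Metric.continuousAt_iff.mp (hp t ht).continuousAt ε hε
  obtain ⟨δ₂, hδ₂, hqc⟩ := Metric.continuousAt_iff.mp (hq t ht).continuousAt ε hε
  set δ : ℝ := min (min δ₁ δ₂) (min ε (b - t)) / 2 with hδdef
  have hδpos : 0 < δ := by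
    have : (0:ℝ) < min (min δ₁ δ₂) (min ε (b - t)) := by
      simp only [lt_min_iff]
      exact ⟨⟨hδ₁, hδ₂⟩, hε, by linarith⟩
    positivity
  have hδbt : δ < b - t := by
    have h1 : min (min δ₁ δ₂) (min ε (b - t)) ≤ b - t := (min_le_right _ _).trans (min_le_right _ _)
    have : (0:ℝ) < b - t := by linarith
    linarith
  have hδε : δ < ε := by
    have h1 : min (min δ₁ δ₂) (min ε (b - t)) ≤ ε := (min_le_right _ _).trans (min_le_left _ _)
    linarith
  have hδ1' : δ < δ₁ := by
    have h1 : min (min δ₁ δ₂) (min ε (b - t)) ≤ δ₁ := (min_le_left _ _).trans (min_le_left _ _)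
    linarith
  have hδ2' : δ < δ₂ := by
    have h1 : min (min δ₁ δ₂) (min ε (b - t)) ≤ δ₂ := (min_le_left _ _).trans (min_le_right _ _)
    linarith
  refine ⟨δ, hδpos, by linarith, ?_⟩
  have hmem : ∀ u ∈ Set.Icc t (t + δ), u ∈ Set.Ioc a b ∩ Set.Ioo (t - ε) (t + ε) := by
    intro u hu
    refine ⟨⟨lt_of_lt_of_le ht.1 hu.1, by linarith [hu.2]⟩, by linarith [hu.1], by linarith [hu.2]⟩
  have hdist : ∀ u ∈ Set.Icc t (t + δ), dist u t < min δ₁ δ₂ := by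
    intro u hu
    rw [Real.dist_eq, abs_lt]
    constructor <;> [linarith [hu.1, lt_min hδ₁ hδ₂]; skip]
    have : u - t ≤ δ := by linarith [hu.2]
    exact lt_of_le_of_lt this (lt_min hδ1' hδ2')
  exact ODE_solution_unique_of_mem_Icc_right
    (v := f)
    (s := fun u => if u ∈ Set.Ioc a b ∩ Set.Ioo (t - ε) (t + ε)
      then Set.Ioo (p t - ε) (p t + ε) else (∅ : Set ℝ))
    (K := K)
    (fun u _ => by
      by_cases h : u ∈ Set.Ioc a b ∩ Set.Ioo (t - ε) (t + ε)
      · simpa [h] using hK u h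
      · simpa [h] using lipschitzOnWith_empty K (f u))
    (fun u hu => ((hp u (hmem u hu).1).continuousAt).continuousWithinAt)
    (fun u hu => (hp u (hmem u (Set.Ico_subset_Icc_self hu)).1).hasDerivWithinAt)
    (fun u hu => by
      have hu' := Set.Ico_subset_Icc_self hu
      have : dist (p u) (p t) < ε := hpc (lt_of_lt_of_le (hdist u hu') (min_le_left _ _))
      rw [Real.dist_eq, abs_lt] at this
      simp only [hmem u hu', if_pos]
      exact ⟨by linarith [this.1], by linarith [this.2]⟩)
    (fun u hu => ((hq u (hmem u hu).1).continuousAt).continuousWithinAt)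
    (fun u hu => (hq u (hmem u (Set.Ico_subset_Icc_self hu)).1).hasDerivWithinAt)
    (fun u hu => by
      have hu' := Set.Ico_subset_Icc_self hu
      have : dist (q u) (p t) < ε := by
        rw [heq]
        exact hqc (lt_of_lt_of_le (hdist u hu') (min_le_right _ _))
      rw [Real.dist_eq, abs_lt] at this
      simp only [hmem u hu', if_pos]
      exact ⟨by linarith [this.1], by linarith [this.2]⟩)
    heq

private lemma ode_local_eq_left
    (f : ℝ → ℝ → ℝ) (a b : ℝ)
    (hlip : ∀ θ ∈ Set.Ioc a b, ∀ ξ : ℝ, ∃ ε > 0, ∃ K : NNReal,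
      ∀ t ∈ Set.Ioc a b ∩ Set.Ioo (θ - ε) (θ + ε),
        LipschitzOnWith K (f t) (Set.Ioo (ξ - ε) (ξ + ε)))
    (p q : ℝ → ℝ)
    (hp : ∀ θ ∈ Set.Ioc a b, HasDerivAt p (f θ (p θ)) θ)
    (hq : ∀ θ ∈ Set.Ioc a b, HasDerivAt q (f θ (q θ)) θ)
    {t : ℝ} (ht : t ∈ Set.Ioc a b) (heq : p t = q t) :
    ∃ δ > 0, a < t - δ ∧ Set.EqOn p q (Set.Icc (t - δ) t) := by
  obtain ⟨ε, hε, K, hK⟩ := hlip t ht (p t)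
  obtain ⟨δ₁, hδ₁, hpc⟩ := Metric.continuousAt_iff.mp (hp t ht).continuousAt ε hε
  obtain ⟨δ₂, hδ₂, hqc⟩ := Metric.continuousAt_iff.mp (hq t ht).continuousAt ε hε
  set δ : ℝ := min (min δ₁ δ₂) (min ε (t - a)) / 2 with hδdef
  have hδpos : 0 < δ := by
    have : (0:ℝ) < min (min δ₁ δ₂) (min ε (t - a)) := by
      simp only [lt_min_iff]
      exact ⟨⟨hδ₁, hδ₂⟩, hε, by linarith [ht.1]⟩
    positivity
  have hδta : δ < t - a := by
    have h1 : min (min δ₁ δ₂) (min ε (t - a)) ≤ t - a := (min_le_right _ _).trans (min_le_right _ _)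
    have : (0:ℝ) < t - a := by linarith [ht.1]
    linarith
  have hδε : δ < ε := by
    have h1 : min (min δ₁ δ₂) (min ε (t - a)) ≤ ε := (min_le_right _ _).trans (min_le_left _ _)
    linarith
  have hδ1' : δ < δ₁ := by
    have h1 : min (min δ₁ δ₂) (min ε (t - a)) ≤ δ₁ := (min_le_left _ _).trans (min_le_left _ _)
    linarith
  have hδ2' : δ < δ₂ := by
    have h1 : min (min δ₁ δ₂) (min ε (t - a)) ≤ δ₂ := (min_le_left _ _).trans (min_le_right _ _)
    linarith
  refine ⟨δ, hδpos, by linarith, ?_⟩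
  have hmem : ∀ u ∈ Set.Icc (t - δ) t, u ∈ Set.Ioc a b ∩ Set.Ioo (t - ε) (t + ε) := by
    intro u hu
    refine ⟨⟨by linarith [hu.1], le_trans hu.2 ht.2⟩, by linarith [hu.1], by linarith [hu.2]⟩
  have hdist : ∀ u ∈ Set.Icc (t - δ) t, dist u t < min δ₁ δ₂ := by
    intro u hu
    rw [Real.dist_eq, abs_lt]
    refine ⟨by linarith [hu.1, lt_min hδ1' hδ2'], ?_⟩
    have : u - t ≤ 0 := by linarith [hu.2]
    exact lt_of_le_of_lt this (lt_min hδ₁ hδ₂)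
  exact ODE_solution_unique_of_mem_Icc_left
    (v := f)
    (s := fun u => if u ∈ Set.Ioc a b ∩ Set.Ioo (t - ε) (t + ε)
      then Set.Ioo (p t - ε) (p t + ε) else (∅ : Set ℝ))
    (K := K)
    (fun u _ => by
      by_cases h : u ∈ Set.Ioc a b ∩ Set.Ioo (t - ε) (t + ε)
      · simpa [h] using hK u h
      · simpa [h] using lipschitzOnWith_empty K (f u))
    (fun u hu => ((hp u (hmem u hu).1).continuousAt).continuousWithinAt)
    (fun u hu => (hp u (hmem u (Set.Ioc_subset_Icc_self hu)).1).hasDerivWithinAt)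
    (fun u hu => by
      have hu' := Set.Ioc_subset_Icc_self hu
      have : dist (p u) (p t) < ε := hpc (lt_of_lt_of_le (hdist u hu') (min_le_left _ _))
      rw [Real.dist_eq, abs_lt] at this
      simp only [hmem u hu', if_pos]
      exact ⟨by linarith [this.1], by linarith [this.2]⟩)
    (fun u hu => ((hq u (hmem u hu).1).continuousAt).continuousWithinAt)
    (fun u hu => (hq u (hmem u (Set.Ioc_subset_Icc_self hu)).1).hasDerivWithinAt)
    (fun u hu => by
      have hu' := Set.Ioc_subset_Icc_self hu
      have : dist (q u) (p t) < ε := by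
        rw [heq]
        exact hqc (lt_of_lt_of_le (hdist u hu') (min_le_right _ _))
      rw [Real.dist_eq, abs_lt] at this
      simp only [hmem u hu', if_pos]
      exact ⟨by linarith [this.1], by linarith [this.2]⟩)
    heq

private lemma ode_agree
    (f : ℝ → ℝ → ℝ) (a b : ℝ)
    (hlip : ∀ θ ∈ Set.Ioc a b, ∀ ξ : ℝ, ∃ ε > 0, ∃ K : NNReal,
      ∀ t ∈ Set.Ioc a b ∩ Set.Ioo (θ - ε) (θ + ε),
        LipschitzOnWith K (f t) (Set.Ioo (ξ - ε) (ξ + ε)))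
    (p q : ℝ → ℝ)
    (hp : ∀ θ ∈ Set.Ioc a b, HasDerivAt p (f θ (p θ)) θ)
    (hq : ∀ θ ∈ Set.Ioc a b, HasDerivAt q (f θ (q θ)) θ)
    {c d : ℝ} (hc : c ∈ Set.Ioc a b) (hd : d ∈ Set.Ioc a b) (h : p c = q c) :
    p d = q d := by
  rcases le_total c d with hcd | hcd
  · -- forward direction via sSup
    set Z : Set ℝ := Set.Icc c d ∩ (fun u => p u - q u) ⁻¹' {0} with hZ
    have hsub : Set.Icc c d ⊆ Set.Ioc a b := fun u hu =>
      ⟨lt_of_lt_of_le hc.1 hu.1, le_trans hu.2 hd.2⟩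
    have hZclosed : IsClosed Z := by
      apply ContinuousOn.preimage_isClosed_of_isClosed _ isClosed_Icc isClosed_singleton
      intro u hu
      exact (((hp u (hsub hu)).continuousAt.sub
        (hq u (hsub hu)).continuousAt)).continuousWithinAt
    have hZne : Z.Nonempty := ⟨c, ⟨le_rfl, hcd⟩, by simp [h, sub_eq_zero]⟩
    have hZbdd : BddAbove Z := BddAbove.mono Set.inter_subset_left bddAbove_Icc
    set m := sSup Z with hm
    have hmZ : m ∈ Z := hZclosed.csSup_mem hZne hZbdd
    have hmIcc : m ∈ Set.Icc c d := hmZ.1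
    have hmpq : p m = q m := by
      have := hmZ.2
      simpa [sub_eq_zero] using this
    rcases eq_or_lt_of_le hmIcc.2 with hmd | hmd
    · rw [← hmd]; exact hmpq
    · have hm_ab : m ∈ Set.Ioc a b := hsub hmIcc
      have hmb : m < b := lt_of_lt_of_le hmd hd.2
      obtain ⟨δ, hδ, hδb, heqon⟩ := ode_local_eq_right f a b hlip p q hp hq hm_ab hmb hmpq
      set m' := min (m + δ) d with hm'
      have hpm' : p m' = q m' := heqon ⟨le_min (by linarith) hmd.le, min_le_left _ _⟩
      have hm'Z : m' ∈ Z := by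
        refine ⟨⟨le_trans hmIcc.1 (le_min (by linarith) hmIcc.2), min_le_right _ _⟩, ?_⟩
        simp [hpm', sub_eq_zero]
      have h1 : m' ≤ m := le_csSup hZbdd hm'Z
      have h2 : m < m' := lt_min (by linarith) hmd
      linarith
  · -- backward direction via sInf
    set Z : Set ℝ := Set.Icc d c ∩ (fun u => p u - q u) ⁻¹' {0} with hZ
    have hsub : Set.Icc d c ⊆ Set.Ioc a b := fun u hu =>
      ⟨lt_of_lt_of_le hd.1 hu.1, le_trans hu.2 hc.2⟩
    have hZclosed : IsClosed Z := by
      apply ContinuousOn.preimage_isClosed_of_isClosed _ isClosed_Icc isClosed_singleton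
      intro u hu
      exact (((hp u (hsub hu)).continuousAt.sub
        (hq u (hsub hu)).continuousAt)).continuousWithinAt
    have hZne : Z.Nonempty := ⟨c, ⟨hcd, le_rfl⟩, by simp [h, sub_eq_zero]⟩
    have hZbdd : BddBelow Z := BddBelow.mono Set.inter_subset_left bddBelow_Icc
    set m := sInf Z with hm
    have hmZ : m ∈ Z := hZclosed.csInf_mem hZne hZbdd
    have hmIcc : m ∈ Set.Icc d c := hmZ.1
    have hmpq : p m = q m := by
      have := hmZ.2
      simpa [sub_eq_zero] using this
    rcases eq_or_lt_of_le hmIcc.1 with hmd | hmd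
    · rw [hmd]; exact hmpq
    · have hm_ab : m ∈ Set.Ioc a b := hsub hmIcc
      obtain ⟨δ, hδ, hδa, heqon⟩ := ode_local_eq_left f a b hlip p q hp hq hm_ab hmpq
      set m' := max (m - δ) d with hm'
      have hpm' : p m' = q m' := heqon ⟨le_max_left _ _, max_le (by linarith) hmd.le⟩
      have hm'Z : m' ∈ Z := by
        refine ⟨⟨le_max_right _ _, le_trans (max_le (by linarith) hmd.le) hmIcc.2⟩, ?_⟩
        simp [hpm', sub_eq_zero]
      have h1 : m ≤ m' := csInf_le hZbdd hm'Z
      have h2 : m' < m := max_lt (by linarith) hmd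
      linarith

/-- convergence cone theorem: `f` continuous on `[θ₀, b] × ℝ` with
`f θ₀ ρ₀ = 0` and locally Lipschitz in the second variable at every point with first
coordinate in `(θ₀, b]`; `x₁ < x₂` on `(θ₀, b]` are two solutions of the IVP through
`(θ₀, ρ₀)`. If `(θ*, ρ*)` lies strictly between them and `x*` solves the ODE on
`(θ₀, b]` with `x* θ* = ρ*`, then `x₁ < x* < x₂` on `(θ₀, b]` and `x* θ → ρ₀` as
`θ → θ₀⁺`, so `x*` also solves the original IVP. -/
theorem convergence_cone
    (f : ℝ → ℝ → ℝ) (θ₀ b ρ₀ : ℝ) (hb : θ₀ < b)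
    (hfc : ContinuousOn (fun p : ℝ × ℝ => f p.1 p.2) (Set.Icc θ₀ b ×ˢ Set.univ))
    (hf0 : f θ₀ ρ₀ = 0)
    (hlip : ∀ θ ∈ Set.Ioc θ₀ b, ∀ ξ : ℝ, ∃ ε > 0, ∃ K : NNReal,
      ∀ t ∈ Set.Ioc θ₀ b ∩ Set.Ioo (θ - ε) (θ + ε),
        LipschitzOnWith K (f t) (Set.Ioo (ξ - ε) (ξ + ε)))
    (x₁ x₂ : ℝ → ℝ)
    (hx₁ : ∀ θ ∈ Set.Icc θ₀ b, HasDerivAt x₁ (f θ (x₁ θ)) θ)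
    (hx₂ : ∀ θ ∈ Set.Icc θ₀ b, HasDerivAt x₂ (f θ (x₂ θ)) θ)
    (hic₁ : x₁ θ₀ = ρ₀) (hic₂ : x₂ θ₀ = ρ₀)
    (horder : ∀ θ ∈ Set.Ioc θ₀ b, x₁ θ < x₂ θ)
    (θs ρs : ℝ) (hθs : θs ∈ Set.Ioc θ₀ b)
    (hρs : x₁ θs < ρs ∧ ρs < x₂ θs)
    (xs : ℝ → ℝ)
    (hxs : ∀ θ ∈ Set.Ioc θ₀ b, HasDerivAt xs (f θ (xs θ)) θ)
    (hics : xs θs = ρs) :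
    (∀ θ ∈ Set.Ioc θ₀ b, x₁ θ < xs θ ∧ xs θ < x₂ θ) ∧
      Tendsto xs (nhdsWithin θ₀ (Set.Ioi θ₀)) (nhds ρ₀) := by
  have hx₁' : ∀ θ ∈ Set.Ioc θ₀ b, HasDerivAt x₁ (f θ (x₁ θ)) θ :=
    fun θ hθ => hx₁ θ (Set.Ioc_subset_Icc_self hθ)
  have hx₂' : ∀ θ ∈ Set.Ioc θ₀ b, HasDerivAt x₂ (f θ (x₂ θ)) θ :=
    fun θ hθ => hx₂ θ (Set.Ioc_subset_Icc_self hθ)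
  have hne₁ : ∀ θ ∈ Set.Ioc θ₀ b, x₁ θ ≠ xs θ := by
    intro θ hθ h
    have := ode_agree f θ₀ b hlip x₁ xs hx₁' hxs hθ hθs h
    rw [hics] at this
    exact absurd this (ne_of_lt hρs.1)
  have hne₂ : ∀ θ ∈ Set.Ioc θ₀ b, xs θ ≠ x₂ θ := by
    intro θ hθ h
    have := ode_agree f θ₀ b hlip xs x₂ hxs hx₂' hθ hθs h
    rw [hics] at this
    exact absurd this (ne_of_lt hρs.2)
  have htrap : ∀ θ ∈ Set.Ioc θ₀ b, x₁ θ < xs θ ∧ xs θ < x₂ θ := by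
    intro θ hθ
    constructor
    · by_contra hle
      push_neg at hle
      have hlt : xs θ < x₁ θ := lt_of_le_of_ne hle fun h => hne₁ θ hθ h.symm
      set g := fun u => x₁ u - xs u with hg
      have hgc : ContinuousOn g (Set.uIcc θ θs) := by
        intro u hu
        have hu' : u ∈ Set.Ioc θ₀ b := Set.ordConnected_Ioc.uIcc_subset hθ hθs hu
        exact ((hx₁' u hu').continuousAt.sub (hxs u hu').continuousAt).continuousWithinAt
      have h0 : (0:ℝ) ∈ Set.uIcc (g θ) (g θs) := by
        rw [Set.mem_uIcc]
        right
        constructor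
        · simp only [hg]; rw [hics]; linarith [hρs.1]
        · simp only [hg]; linarith
      obtain ⟨c, hcmem, hgc0⟩ := intermediate_value_uIcc hgc h0
      have hc' : c ∈ Set.Ioc θ₀ b := Set.ordConnected_Ioc.uIcc_subset hθ hθs hcmem
      have hceq : x₁ c = xs c := by
        have : x₁ c - xs c = 0 := hgc0
        linarith
      have := ode_agree f θ₀ b hlip x₁ xs hx₁' hxs hc' hθs hceq
      rw [hics] at this
      exact absurd this (ne_of_lt hρs.1)
    · by_contra hle
      push_neg at hle
      have hlt : x₂ θ < xs θ := lt_of_le_of_ne hle fun h => hne₂ θ hθ h.symm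
      set g := fun u => xs u - x₂ u with hg
      have hgc : ContinuousOn g (Set.uIcc θ θs) := by
        intro u hu
        have hu' : u ∈ Set.Ioc θ₀ b := Set.ordConnected_Ioc.uIcc_subset hθ hθs hu
        exact ((hxs u hu').continuousAt.sub (hx₂' u hu').continuousAt).continuousWithinAt
      have h0 : (0:ℝ) ∈ Set.uIcc (g θ) (g θs) := by
        rw [Set.mem_uIcc]
        right
        constructor
        · simp only [hg]; rw [hics]; linarith [hρs.2]
        · simp only [hg]; linarith
      obtain ⟨c, hcmem, hgc0⟩ := intermediate_value_uIcc hgc h0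
      have hc' : c ∈ Set.Ioc θ₀ b := Set.ordConnected_Ioc.uIcc_subset hθ hθs hcmem
      have hceq : xs c = x₂ c := by
        have : xs c - x₂ c = 0 := hgc0
        linarith
      have := ode_agree f θ₀ b hlip xs x₂ hxs hx₂' hc' hθs hceq
      rw [hics] at this
      exact absurd this (ne_of_lt hρs.2)
  refine ⟨htrap, ?_⟩
  have hlim₁ : Tendsto x₁ (nhdsWithin θ₀ (Set.Ioi θ₀)) (nhds ρ₀) := by
    have h := (hx₁ θ₀ ⟨le_rfl, hb.le⟩).continuousAt.tendsto
    rw [hic₁] at h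
    exact tendsto_nhdsWithin_of_tendsto_nhds h
  have hlim₂ : Tendsto x₂ (nhdsWithin θ₀ (Set.Ioi θ₀)) (nhds ρ₀) := by
    have h := (hx₂ θ₀ ⟨le_rfl, hb.le⟩).continuousAt.tendsto
    rw [hic₂] at h
    exact tendsto_nhdsWithin_of_tendsto_nhds h
  have hev : ∀ᶠ θ in nhdsWithin θ₀ (Set.Ioi θ₀), θ ∈ Set.Ioc θ₀ b := by
    filter_upwards [Ioo_mem_nhdsGT_of_mem (Set.left_mem_Ico.mpr hb)] with θ hθ
    exact ⟨hθ.1, hθ.2.le⟩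
  exact tendsto_of_tendsto_of_tendsto_of_le_of_le' hlim₁ hlim₂
    (hev.mono fun θ hθ => (htrap θ hθ).1.le) (hev.mono fun θ hθ => (htrap θ hθ).2.le)
end
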